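/- The outer-bound expression is nondecreasing in the in-block memory length: U(L) ≤ U(L+1) for every integer L ≥ 1. -/

import Mathlib

open Finset Filter Topology

/-- Binary entropy function with base-2 logarithm. `Real.logb 2 0 = 0`, so
`H2 0 = H2 1 = 0` automatically. -/
noncomputable def H2 (p : ℝ) : ℝ :=
  -(p * Real.logb 2 p) - (1 - p) * Real.logb 2 (1 - p)

/-- Partial sums `s_j = ∑_{k=1}^j c_k` of the beam-budget sequence. -/
noncomputable def s (K B : ℝ) : ℕ → ℝ
  | 0 => 0
  | (j+1) => s K B j + min ((K - s K B j) / 2) B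

/-- The beam-budget sequence: `c_0 = 0` and `c_j = min((K - s_{j-1})/2, B)` for `j ≥ 1`. -/
noncomputable def c (K B : ℝ) : ℕ → ℝ
  | 0 => 0
  | (j+1) => min ((K - s K B j) / 2) B

/-- The `j`-th term of the outer bound (Theorem 1), for `j ≥ 1`. -/
noncomputable def t (K B : ℝ) (j : ℕ) : ℝ :=
  (1 - s K B (j-1) / K) * H2 (c K B j / (K - s K B (j-1))) + s K B (j-1) / K

/-- The outer-bound (Theorem 1) expression `U(L)`. -/
noncomputable def U (K B : ℝ) (L : ℕ) : ℝ :=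
  (1 / (L : ℝ)) * ∑ j ∈ Finset.Icc 1 L, t K B j

/-- The `j`-th eavesdropper-leakage term, for `j ≥ 1` (natural subtraction makes the
middle term vanish at `j = 1` and the final sum empty for `j ≤ 3`). -/
noncomputable def g (K B : ℝ) (j : ℕ) : ℝ :=
  ((K - s K B (j-1)) / K) * H2 (c K B j / K)
  + (c K B (j-1) * (K - s K B (j-2)) / K^2) *
      H2 ((1/2) * c K B (j-1) / (K - s K B (j-2)))
  + ∑ k ∈ Finset.Icc 1 (j-3),
      (1/K) * ((c K B (k+1))^2 / K^2) * (1/2 : ℝ)^(2*(j-k-2)-1)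

/-- The gap `G(L)` between the outer and inner bounds. -/
noncomputable def G (K B : ℝ) (L : ℕ) : ℝ :=
  (1 / (L : ℝ)) * ∑ j ∈ Finset.Icc 1 L, g K B j

/-- The inner-bound (Theorem 2) expression `I(L) = U(L) - G(L)`. -/
noncomputable def Ib (K B : ℝ) (L : ℕ) : ℝ := U K B L - G K B L

/-!
With `r_j = K - s_j` the number of directions not yet used, `K t_{j+1} = s_j + r_j H₂(c_{j+1} / r_j)`
and `r_{j+1} = r_j - c_{j+1}`, so `t_{j+1} ≤ t_{j+2}` says `r H₂(c / r) ≤ (r - c) H₂(c' / (r - c)) + c`.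
When the budget is `r / 2` both sides equal `r`; when only the next one is, this is `H₂ ≤ 1`; otherwise
`c = c' = B ≤ a / 2` for `a = r - B`, and it is the estimate
`(1 + x) log (1 + x) + (1 - x) log (1 - x) ≤ x log 2` at `x = B / a`, which comes from
`log (1 - x²) ≤ -x²` and `(1 + x) ≤ 2 (1 - x) eˣ`. A nondecreasing sequence has nondecreasing
running averages `U(L)`.
-/

open Real

lemma H2_eq_binEntropy_div_log_two (p : ℝ) : H2 p = binEntropy p / log 2 := by
  simp only [H2, binEntropy, logb, log_inv]
  ring

lemma H2_le_one (p : ℝ) : H2 p ≤ 1 := by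
  rw [H2_eq_binEntropy_div_log_two, div_le_one (log_pos one_lt_two)]
  exact binEntropy_le_log_two

lemma H2_two_inv : H2 2⁻¹ = 1 := by
  rw [H2_eq_binEntropy_div_log_two, binEntropy_two_inv, div_self (log_pos one_lt_two).ne']

lemma mul_binEntropy_div {B ρ : ℝ} (hB : 0 < B) (hBρ : B < ρ) :
    ρ * binEntropy (B / ρ) = ρ * log ρ - B * log B - (ρ - B) * log (ρ - B) := by
  have hρ : 0 < ρ := hB.trans hBρ
  have hρB : 0 < ρ - B := sub_pos.2 hBρ
  rw [binEntropy, inv_div, show (1 : ℝ) - B / ρ = (ρ - B) / ρ by field_simp, inv_div,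
    log_div hρ.ne' hB.ne', log_div hρ.ne' hρB.ne']
  field_simp
  ring

lemma one_add_mul_log_add_one_sub_mul_log_le {x : ℝ} (hx₀ : 0 ≤ x) (hx : x ≤ 1 / 2) :
    (1 + x) * log (1 + x) + (1 - x) * log (1 - x) ≤ x * log 2 := by
  have hxp : 0 < 1 + x := by linarith
  have hxm : 0 < 1 - x := by linarith
  have hsum : log (1 + x) + log (1 - x) ≤ -x ^ 2 := by
    rw [← log_mul hxp.ne' hxm.ne']
    linarith [log_le_sub_one_of_pos (show 0 < (1 + x) * (1 - x) by positivity)]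
  have hdiff : log (1 + x) - log (1 - x) ≤ log 2 + x := by
    have hexp : 1 + x ≤ 2 * (1 - x) * exp x := by
      nlinarith [add_one_le_exp x]
    have := log_le_log hxp hexp
    rw [log_mul (by positivity) (exp_pos x).ne', log_mul two_ne_zero hxm.ne', log_exp] at this
    linarith
  nlinarith [mul_le_mul_of_nonneg_left hdiff hx₀]

lemma add_mul_H2_div_add_le {a B : ℝ} (hB : 0 < B) (ha : 2 * B ≤ a) :
    (a + B) * H2 (B / (a + B)) ≤ a * H2 (B / a) + B := by
  have ha₀ : 0 < a := by linarith
  have hkey := one_add_mul_log_add_one_sub_mul_log_le (x := B / a) (by positivity)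
    (by rw [div_le_iff₀ ha₀]; linarith)
  rw [show 1 + B / a = (a + B) / a by field_simp, show 1 - B / a = (a - B) / a by field_simp,
    log_div (by linarith) ha₀.ne', log_div (by linarith) ha₀.ne'] at hkey
  have hkey' : (a + B) * log (a + B) + (a - B) * log (a - B) - 2 * a * log a ≤ B * log 2 := by
    have := mul_le_mul_of_nonneg_left hkey ha₀.le
    field_simp at this
    linarith
  simp only [H2_eq_binEntropy_div_log_two, ← mul_div_assoc]
  rw [mul_binEntropy_div hB (by linarith), mul_binEntropy_div hB (by linarith),
    div_add' _ _ _ (log_pos one_lt_two).ne', div_le_div_iff_of_pos_right (log_pos one_lt_two)]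
  rw [show a + B - B = a by ring]
  linarith

noncomputable def budgetEntropy (B r : ℝ) : ℝ := r * H2 (min (r / 2) B / r)

lemma budgetEntropy_of_le {B r : ℝ} (hr : 0 < r) (h : r ≤ 2 * B) : budgetEntropy B r = r := by
  rw [budgetEntropy, min_eq_left (by linarith), div_div_cancel_left' hr.ne', H2_two_inv, mul_one]

lemma budgetEntropy_of_lt {B r : ℝ} (h : 2 * B < r) : budgetEntropy B r = r * H2 (B / r) := by
  rw [budgetEntropy, min_eq_right (by linarith)]

lemma budgetEntropy_le_budgetEntropy_sub_add {B r : ℝ} (hB : 0 < B) (hr : 0 < r) :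
    budgetEntropy B r ≤ budgetEntropy B (r - min (r / 2) B) + min (r / 2) B := by
  rcases le_or_gt r (2 * B) with hr₂ | hr₂
  · rw [min_eq_left (by linarith), budgetEntropy_of_le hr hr₂,
      budgetEntropy_of_le (by linarith) (by linarith)]
    linarith
  rw [min_eq_right (by linarith), budgetEntropy_of_lt hr₂]
  rcases le_or_gt (r - B) (2 * B) with hr₃ | hr₃
  · rw [budgetEntropy_of_le (by linarith) hr₃]
    linarith [mul_le_of_le_one_right hr.le (H2_le_one (B / r))]
  · rw [budgetEntropy_of_lt hr₃]
    simpa using add_mul_H2_div_add_le hB hr₃.le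

lemma s_succ (K B : ℝ) (j : ℕ) : s K B (j + 1) = s K B j + min ((K - s K B j) / 2) B := rfl

lemma s_lt {K : ℝ} (hK : 0 < K) (B : ℝ) (j : ℕ) : s K B j < K := by
  induction j with
  | zero => exact hK
  | succ j ih =>
    rw [s_succ]
    linarith [min_le_left ((K - s K B j) / 2) B]

lemma t_succ_eq {K : ℝ} (hK : K ≠ 0) (B : ℝ) (j : ℕ) :
    t K B (j + 1) = (s K B j + budgetEntropy B (K - s K B j)) / K := by
  simp only [t, c, budgetEntropy, Nat.add_sub_cancel]
  field_simp
  ring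

lemma t_succ_le_t_succ_succ {K B : ℝ} (hK : 0 < K) (hB : 0 < B) (j : ℕ) :
    t K B (j + 1) ≤ t K B (j + 2) := by
  rw [t_succ_eq hK.ne', t_succ_eq hK.ne', div_le_div_iff_of_pos_right hK, s_succ]
  have := budgetEntropy_le_budgetEntropy_sub_add hB (sub_pos.2 (s_lt hK B j))
  rw [show K - (s K B j + min ((K - s K B j) / 2) B)
      = K - s K B j - min ((K - s K B j) / 2) B by ring]
  linarith

lemma t_le_t {K B : ℝ} (hK : 0 < K) (hB : 0 < B) {i j : ℕ} (hi : 1 ≤ i) (hij : i ≤ j) :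
    t K B i ≤ t K B j := by
  obtain ⟨i, rfl⟩ := Nat.exists_eq_add_of_le' hi
  obtain ⟨j, rfl⟩ := Nat.exists_eq_add_of_le' (hi.trans hij)
  exact monotone_nat_of_le_succ (f := fun n => t K B (n + 1)) (t_succ_le_t_succ_succ hK hB)
    (by omega)

lemma average_Icc_le_average_Icc_succ {f : ℕ → ℝ} {L : ℕ} (hL : 1 ≤ L)
    (hf : ∀ j ∈ Icc 1 L, f j ≤ f (L + 1)) :
    1 / (L : ℝ) * ∑ j ∈ Icc 1 L, f j ≤ 1 / ((L + 1 : ℕ) : ℝ) * ∑ j ∈ Icc 1 (L + 1), f j := by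
  have hL₀ : (0 : ℝ) < L := by exact_mod_cast hL
  have hsum : ∑ j ∈ Icc 1 L, f j ≤ L * f (L + 1) := by
    simpa using sum_le_card_nsmul _ _ _ hf
  rw [sum_Icc_succ_top (by omega), Nat.cast_succ, one_div_mul_eq_div, one_div_mul_eq_div,
    div_le_div_iff₀ hL₀ (by positivity)]
  linarith

theorem stmt_8 (K : ℕ) (hK : 2 ≤ K) (B : ℝ) (hB : 0 < B) :
    ∀ L : ℕ, 1 ≤ L → U K B L ≤ U K B (L+1) := by
  intro L hL
  have hK₀ : (0 : ℝ) < K := by exact_mod_cast (by omega : 0 < K)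
  exact average_Icc_le_average_Icc_succ hL fun j hj =>
    t_le_t hK₀ hB (mem_Icc.1 hj).1 ((mem_Icc.1 hj).2.trans L.le_succ)
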